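/- Let M be an mtt and t ∈ T_Δ a fixed output tree, with run, ρ, V defined from M and t as in the context. Then for every input tree s' ∈ T_Σ, every state q ∈ Q of rank n, and all parameter-free trees r_1,…,r_n over Δ ∪ (Q × T_Σ): ρ(⟦⟨q,s'⟩(r_1,…,r_n)⟧_IO) = { v' ∈ V | there exist v_1,…,v_n ∈ V with (q,(v_1,…,v_n),v') ∈ run(s') and v_i ∈ ρ(⟦r_i⟧_IO) for all i }. -/

import Mathlib

namespace MttF

/-- Finite ordered trees over a label type `α`. -/
inductive RTree (α : Type) : Type
  | node : α → List (RTree α) → RTree α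

namespace RTree

variable {α β : Type}

/-- The root label of a tree. -/
def label : RTree α → α
  | node a _ => a

/-- The list of immediate subtrees of a tree. -/
def children : RTree α → List (RTree α)
  | node _ ts => ts

/-- Relabelling of trees. -/
def map (f : α → β) : RTree α → RTree β
  | node a ts => node (f a) (ts.attach.map (fun x => map f x.1))
decreasing_by
  have := List.sizeOf_lt_of_mem x.2
  simp only [node.sizeOf_spec]
  omega

/-- A tree is well-formed with respect to a rank function if every node labeled
by a rank-`k` symbol has exactly `k` children. `T_Σ` is the set of well-formed
trees over `Σ`. -/
inductive Wf (rk : α → ℕ) : RTree α → Prop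
  | node {a : α} {ts : List (RTree α)} :
      ts.length = rk a → (∀ t ∈ ts, Wf rk t) → Wf rk (node a ts)

/-- `Subtree u t` holds iff `u` is a subtree of `t` (rooted at some node of `t`). -/
inductive Subtree : RTree α → RTree α → Prop
  | refl (t : RTree α) : Subtree t t
  | step {u c : RTree α} {a : α} {ts : List (RTree α)} :
      c ∈ ts → Subtree u c → Subtree u (node a ts)

end RTree

/-- Labels for output trees with parameters: trees over `Δ ∪ Y`. -/
inductive OLab (Δ : Type) : Type
  | out (d : Δ)
  | param (i : ℕ)

/-- Labels for right-hand sides of mtt rules: trees over `Δ ∪ (Q × X) ∪ Y`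
(the second component of a call is the index of the input variable `x`). -/
inductive RLab (Δ Q : Type) : Type
  | out (d : Δ)
  | call (q : Q) (x : ℕ)
  | param (i : ℕ)

/-- Labels for "semantic" trees over `Δ ∪ (Q × T_Σ) ∪ Y`. -/
inductive SLab (Γ Δ Q : Type) : Type
  | out (d : Δ)
  | call (q : Q) (s : RTree Γ)
  | param (i : ℕ)

/-- Trees over `Δ ∪ Y`. -/
abbrev OT (Δ : Type) := RTree (OLab Δ)
/-- Right-hand side trees over `Δ ∪ (Q × X) ∪ Y`. -/
abbrev Rhs (Δ Q : Type) := RTree (RLab Δ Q)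
/-- Trees over `Δ ∪ (Q × T_Σ) ∪ Y`. -/
abbrev ST (Γ Δ Q : Type) := RTree (SLab Γ Δ Q)

/-- First-order substitution `x_i := ss_i` on a label of a right-hand side
(indices are 0-based; for well-formed rules the index is always in range). -/
def RLab.subst {Γ Δ Q : Type} (ss : List (RTree Γ)) : RLab Δ Q → SLab Γ Δ Q
  | .out d => .out d
  | .param i => .param i
  | .call q x =>
    match ss[x]? with
    | some s => .call q s
    | none => .param x

/-- `r[x_1/s_1, …, x_k/s_k]`. -/
def substX {Γ Δ Q : Type} (ss : List (RTree Γ)) (r : Rhs Δ Q) : ST Γ Δ Q :=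
  r.map (RLab.subst ss)

/-- Second-order (parameter) substitution `t[y_1/ts_1, …, y_n/ts_n]`
(`y` indices are 0-based). -/
def substY {Δ : Type} (ts : List (OT Δ)) : OT Δ → OT Δ
  | .node (.param i) _ => ts.getD i (.node (.param i) [])
  | .node (.out d) us => .node (.out d) (us.attach.map (fun x => substY ts x.1))
decreasing_by
  have := List.sizeOf_lt_of_mem x.2
  simp only [RTree.node.sizeOf_spec]
  omega

/-- The embedding of `T_Δ` into the trees over `Δ ∪ Y`. -/
def embed {Δ : Type} (t : RTree Δ) : OT Δ := t.map OLab.out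

variable {Γ Δ Q : Type}

/-- IO (call-by-value, inside-out) semantics: `SemIO rsel u t` holds iff
`t ∈ ⟦u⟧_IO`.  The rules of the transducer are given by a selector
`rsel q σ ss`: the set of right-hand sides of the `⟨q,σ⟩`-rules that are
applicable when the children of the current input node are `ss` (for a plain
mtt this does not depend on `ss`, cf. `plainSel`). -/
inductive SemIO (rsel : Q → Γ → List (RTree Γ) → Set (Rhs Δ Q)) :
    ST Γ Δ Q → OT Δ → Prop
  | param (i : ℕ) :
      SemIO rsel (.node (.param i) []) (.node (.param i) [])
  | out {d : Δ} {us : List (ST Γ Δ Q)} {ts : List (OT Δ)}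
      (hlen : ts.length = us.length)
      (h : ∀ i : Fin us.length, SemIO rsel (us.get i) (ts.get (i.cast hlen.symm))) :
      SemIO rsel (.node (.out d) us) (.node (.out d) ts)
  | call {q : Q} {σ : Γ} {ss : List (RTree Γ)} {us : List (ST Γ Δ Q)}
      {r : Rhs Δ Q} {t₀ : OT Δ} {ts : List (OT Δ)}
      (hr : r ∈ rsel q σ ss)
      (h₀ : SemIO rsel (substX ss r) t₀)
      (hlen : ts.length = us.length)
      (h : ∀ i : Fin us.length, SemIO rsel (us.get i) (ts.get (i.cast hlen.symm))) :
      SemIO rsel (.node (.call q (.node σ ss)) us) (substY ts t₀)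

mutual
/-- OI (call-by-name, outside-in) semantics: `SemOI rsel u t` holds iff
`t ∈ ⟦u⟧_OI`. -/
inductive SemOI (rsel : Q → Γ → List (RTree Γ) → Set (Rhs Δ Q)) :
    ST Γ Δ Q → OT Δ → Prop
  | param (i : ℕ) :
      SemOI rsel (.node (.param i) []) (.node (.param i) [])
  | out {d : Δ} {us : List (ST Γ Δ Q)} {ts : List (OT Δ)}
      (hlen : ts.length = us.length)
      (h : ∀ i : Fin us.length, SemOI rsel (us.get i) (ts.get (i.cast hlen.symm))) :
      SemOI rsel (.node (.out d) us) (.node (.out d) ts)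
  | call {q : Q} {σ : Γ} {ss : List (RTree Γ)} {us : List (ST Γ Δ Q)}
      {r : Rhs Δ Q} {t₀ : OT Δ} {t : OT Δ}
      (hr : r ∈ rsel q σ ss)
      (h₀ : SemOI rsel (substX ss r) t₀)
      (hs : OISub rsel us t₀ t) :
      SemOI rsel (.node (.call q (.node σ ss)) us) t

/-- OI-substitution: `OISub rsel us t₀ t` holds iff `t ∈ (t₀ ←_OI (⟦us_1⟧_OI, …, ⟦us_n⟧_OI))`,
i.e. `t` is obtained from `t₀` by independently replacing every occurrence of a parameter
`y_i` by some member of `⟦us_i⟧_OI`. -/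
inductive OISub (rsel : Q → Γ → List (RTree Γ) → Set (Rhs Δ Q)) :
    List (ST Γ Δ Q) → OT Δ → OT Δ → Prop
  | param {us : List (ST Γ Δ Q)} {i : ℕ} {t : OT Δ}
      (h : i < us.length) (hsem : SemOI rsel (us.get ⟨i, h⟩) t) :
      OISub rsel us (.node (.param i) []) t
  | out {us : List (ST Γ Δ Q)} {d : Δ} {ts ts' : List (OT Δ)}
      (hlen : ts'.length = ts.length)
      (h : ∀ i : Fin ts.length, OISub rsel us (ts.get i) (ts'.get (i.cast hlen.symm))) :
      OISub rsel us (.node (.out d) ts) (.node (.out d) ts')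
end

/-- The rule selector of a plain mtt: the applicable rules do not depend on the
child subtrees of the current input node. -/
def plainSel (rules : Q → Γ → Set (Rhs Δ Q)) :
    Q → Γ → List (RTree Γ) → Set (Rhs Δ Q) :=
  fun q σ _ => rules q σ

/-- The translation `τ_{IO,M} ⊆ T_Σ × T_Δ` realized in IO mode. -/
def tauIO (rankΓ : Γ → ℕ) (rankΔ : Δ → ℕ)
    (rsel : Q → Γ → List (RTree Γ) → Set (Rhs Δ Q)) (q₀ : Q) :
    Set (RTree Γ × RTree Δ) :=
  {p | p.1.Wf rankΓ ∧ p.2.Wf rankΔ ∧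
       SemIO rsel (.node (.call q₀ p.1) []) (embed p.2)}

/-- The translation `τ_{OI,M} ⊆ T_Σ × T_Δ` realized in OI mode. -/
def tauOI (rankΓ : Γ → ℕ) (rankΔ : Δ → ℕ)
    (rsel : Q → Γ → List (RTree Γ) → Set (Rhs Δ Q)) (q₀ : Q) :
    Set (RTree Γ × RTree Δ) :=
  {p | p.1.Wf rankΓ ∧ p.2.Wf rankΔ ∧
       SemOI rsel (.node (.call q₀ p.1) []) (embed p.2)}

/-- Well-formedness of a right-hand side of a rule of an mtt whose current
input symbol has rank `k` and whose current state has rank `m`: output symbols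
have the correct number of children, state calls `⟨q', x_i⟩` have `rank q'`
children and `i < k`, and parameters `y_j` satisfy `j < m`. -/
inductive RhsWf (rankΔ : Δ → ℕ) (rankQ : Q → ℕ) (k m : ℕ) : Rhs Δ Q → Prop
  | out {d : Δ} {ts : List (Rhs Δ Q)}
      (hlen : ts.length = rankΔ d) (h : ∀ t ∈ ts, RhsWf rankΔ rankQ k m t) :
      RhsWf rankΔ rankQ k m (.node (.out d) ts)
  | call {q : Q} {x : ℕ} {ts : List (Rhs Δ Q)}
      (hx : x < k) (hlen : ts.length = rankQ q)
      (h : ∀ t ∈ ts, RhsWf rankΔ rankQ k m t) :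
      RhsWf rankΔ rankQ k m (.node (.call q x) ts)
  | param {i : ℕ} (hi : i < m) : RhsWf rankΔ rankQ k m (.node (.param i) [])

/-- Well-formedness of a tree over `Δ ∪ (Q × T_Σ) ∪ Y`. -/
inductive STWf (rankΓ : Γ → ℕ) (rankΔ : Δ → ℕ) (rankQ : Q → ℕ) : ST Γ Δ Q → Prop
  | out {d : Δ} {ts : List (ST Γ Δ Q)}
      (hlen : ts.length = rankΔ d) (h : ∀ t ∈ ts, STWf rankΓ rankΔ rankQ t) :
      STWf rankΓ rankΔ rankQ (.node (.out d) ts)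
  | call {q : Q} {s : RTree Γ} {ts : List (ST Γ Δ Q)}
      (hs : s.Wf rankΓ) (hlen : ts.length = rankQ q)
      (h : ∀ t ∈ ts, STWf rankΓ rankΔ rankQ t) :
      STWf rankΓ rankΔ rankQ (.node (.call q s) ts)
  | param (i : ℕ) : STWf rankΓ rankΔ rankQ (.node (.param i) [])

/-- A tree over `Δ ∪ (Q × T_Σ) ∪ Y` is parameter-free if no `y_i` occurs in it. -/
inductive NoParam : ST Γ Δ Q → Prop
  | node {l : SLab Γ Δ Q} {ts : List (ST Γ Δ Q)}
      (hl : ∀ i : ℕ, l ≠ .param i) (h : ∀ t ∈ ts, NoParam t) :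
      NoParam (.node l ts)

/-- A macro tree transducer `M = (Q, Σ, Δ, q₀, R)`.  The alphabets `Γ` (input),
`Δ` (output) and the set `Q` of states are ranked; `q₀` has rank `0`; `rules q σ`
is the (finite) set `R_{q,σ}` of right-hand sides of the `⟨q,σ⟩`-rules, and every
right-hand side is a well-formed tree over `Δ ∪ (Q × X_k) ∪ Y_m`. -/
structure MTT (Γ Δ Q : Type) where
  rankΓ : Γ → ℕ
  rankΔ : Δ → ℕ
  rankQ : Q → ℕ
  q₀ : Q
  q₀_rank : rankQ q₀ = 0
  rules : Q → Γ → Set (Rhs Δ Q)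
  rules_fin : ∀ q σ, (rules q σ).Finite
  rules_wf : ∀ q σ, ∀ r ∈ rules q σ, RhsWf rankΔ rankQ (rankΓ σ) (rankQ q) r

/-- The rule selector of a plain mtt. -/
def MTT.sel (M : MTT Γ Δ Q) : Q → Γ → List (RTree Γ) → Set (Rhs Δ Q) :=
  plainSel M.rules

end MttF
namespace MttF

/-- The set `V = V_t ∪ {⊥}`: `some w` stands for the subtree `w` of the fixed
output tree `t`, and `none` stands for `⊥`. -/
abbrev V (Δ : Type) := Option (RTree Δ)

/-- Triples `(q, v⃗, v') ∈ ⋃_i Q^{(i)} × V^i × V`. -/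
abbrev Trip (Δ Q : Type) := Q × List (V Δ) × V Δ

/-- `v` is a legitimate element of `V = V_t ∪ {⊥}` (for `some w`, `w` must be a
subtree of `t`). -/
def InV {Δ : Type} (t : RTree Δ) : V Δ → Prop
  | none => True
  | some w => RTree.Subtree w t

/-- `rhoRel t t' v` holds iff `ρ(t') = v`, where `ρ(t') = t'` if `t'` is a
subtree of `t` and `ρ(t') = ⊥` otherwise (here `t'` ranges over trees over
`Δ ∪ Y`, and subtrees of `t` are compared via the embedding of `T_Δ`). -/
def rhoRel {Δ : Type} (t : RTree Δ) (t' : OT Δ) : V Δ → Prop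
  | some w => RTree.Subtree w t ∧ embed w = t'
  | none => ¬ ∃ w : RTree Δ, RTree.Subtree w t ∧ embed w = t'

/-- `ρ(T)` for a set `T` of output trees. -/
def rhoImg {Δ : Type} (t : RTree Δ) (T : Set (OT Δ)) : Set (V Δ) :=
  {v | ∃ t' ∈ T, rhoRel t t' v}

/-- The predicate `f_{v⃗,a⃗}(r, v')` of the inverse-type construction for
IO-mtts, for the fixed output tree `t`. -/
inductive FPred {Δ Q : Type} (t : RTree Δ) (vs : List (V Δ))
    (aenv : List (Set (Trip Δ Q))) : Rhs Δ Q → V Δ → Prop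
  | param {i : ℕ} {v : V Δ} (h : vs[i]? = some v) :
      FPred t vs aenv (.node (.param i) []) v
  | outSome {d : Δ} {rs : List (Rhs Δ Q)} {w : RTree Δ}
      (hw : RTree.Subtree w t) (hl : w.label = d)
      (h : ∀ i : Fin rs.length, FPred t vs aenv (rs.get i) w.children[i.val]?) :
      FPred t vs aenv (.node (.out d) rs) (some w)
  | outNone {d : Δ} {rs : List (Rhs Δ Q)} (us : List (V Δ))
      (hlen : us.length = rs.length)
      (hus : ∀ u ∈ us, InV t u)
      (h : ∀ i : Fin rs.length, FPred t vs aenv (rs.get i) (us.get (i.cast hlen.symm)))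
      (hno : ¬ ∃ w : RTree Δ, RTree.Subtree w t ∧ w.label = d ∧
          ∀ i : Fin rs.length, w.children[i.val]? = us.get (i.cast hlen.symm)) :
      FPred t vs aenv (.node (.out d) rs) none
  | call {q' : Q} {x : ℕ} {rs : List (Rhs Δ Q)} {v : V Δ} (us : List (V Δ))
      (hlen : us.length = rs.length)
      (ha : (q', us, v) ∈ aenv.getD x ∅)
      (h : ∀ i : Fin rs.length, FPred t vs aenv (rs.get i) (us.get (i.cast hlen.symm))) :
      FPred t vs aenv (.node (.call q' x) rs) v

/-- The run `run(s)` of the (on-the-fly constructed) inverse-type automaton of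
an IO-mtt on the input tree `s`, for the fixed output tree `t`:
`run(σ(s_1,…,s_k)) = {(q, v⃗, v') | ∃ r ∈ R_{q,σ}: f_{v⃗,(run(s_1),…,run(s_k))}(r, v')}`. -/
def runIO {Γ Δ Q : Type} (rankQ : Q → ℕ)
    (rsel : Q → Γ → List (RTree Γ) → Set (Rhs Δ Q)) (t : RTree Δ) :
    RTree Γ → Set (Trip Δ Q)
  | .node σ ss =>
      {trip | trip.2.1.length = rankQ trip.1 ∧ (∀ v ∈ trip.2.1, InV t v) ∧
        InV t trip.2.2 ∧
        ∃ r ∈ rsel trip.1 σ ss,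
          FPred t trip.2.1 (ss.attach.map (fun x => runIO rankQ rsel t x.1)) r trip.2.2}
decreasing_by
  have := List.sizeOf_lt_of_mem x.2
  simp only [RTree.node.sizeOf_spec]
  omega

end MttF

/-!
`ρ` is a homomorphism from output trees into `V`, where a symbol `d` sends `u⃗` to the
subtree `d(u⃗)` of `t` if there is one and to `⊥` otherwise. Consequently
`ρ(t₀[y⃗ := t⃗s])` depends only on `t₀` and `ρ(t⃗s)`, and the predicate
`f_{ρ(t⃗s), run(s⃗)}(r, ·)` describes exactly the values `ρ(t₀[y⃗ := t⃗s])` with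
`t₀ ∈ ⟦r[x⃗ := s⃗]⟧_IO`. This is proved by induction on the input tree and, inside, on `r`.
At a call `⟨q', x_j⟩(r⃗)` the IO semantics substitutes the already evaluated arguments into
the output of a rule for `q'`; composing this substitution with `[y⃗ := t⃗s]` is again a
substitution, because IO outputs of rules for `q'` only contain parameters `y_i` with
`i < rank q'`.
-/

namespace List

variable {α β γ : Type*}

theorem forall₂_exists_map_iff {R : α → γ → Prop} {f : γ → β} {l₁ : List α} {l₂ : List β} :
    Forall₂ (fun a b => ∃ c, R a c ∧ f c = b) l₁ l₂ ↔ ∃ l, Forall₂ R l₁ l ∧ l.map f = l₂ := by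
  induction l₁ generalizing l₂ with
  | nil => simp
  | cons a l₁ ih =>
    simp only [forall₂_cons_left_iff, ih]
    constructor
    · rintro ⟨_, _, ⟨c, hc, rfl⟩, ⟨l, hl, rfl⟩, rfl⟩
      exact ⟨c :: l, ⟨_, _, hc, hl, rfl⟩, rfl⟩
    · rintro ⟨_, ⟨c, l, hc, hl, rfl⟩, rfl⟩
      exact ⟨_, _, ⟨c, hc, rfl⟩, ⟨l, hl, rfl⟩, rfl⟩

theorem forall₂_congr_of_mem {R S : α → β → Prop} {l₁ : List α} {l₂ : List β}
    (h : ∀ a ∈ l₁, ∀ b, R a b ↔ S a b) : Forall₂ R l₁ l₂ ↔ Forall₂ S l₁ l₂ := by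
  induction l₁ generalizing l₂ with
  | nil => simp
  | cons a l₁ ih =>
    simp only [forall₂_cons_left_iff, h a mem_cons_self,
      ih fun a ha => h a (mem_cons_of_mem _ ha)]

theorem map_eq_iff_forall₂ {f : α → β} {l₁ : List α} {l₂ : List β} :
    l₁.map f = l₂ ↔ Forall₂ (fun a b => f a = b) l₁ l₂ := by
  rw [← forall₂_eq_eq_eq, forall₂_map_left_iff]

theorem forall₂_iff_fin {R : α → β → Prop} {l₁ : List α} {l₂ : List β}
    (hlen : l₂.length = l₁.length) :
    Forall₂ R l₁ l₂ ↔ ∀ i : Fin l₁.length, R (l₁.get i) (l₂.get (i.cast hlen.symm)) := by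
  rw [forall₂_iff_get]
  exact ⟨fun h i => h.2 i i.2 (by simp [hlen]),
    fun h => ⟨hlen.symm, fun i h₁ _ => h ⟨i, h₁⟩⟩⟩

end List

open Classical in
theorem Option.dite_choose_eq_some_iff {α : Type*} {P : α → Prop}
    (hP : ∀ a b, P a → P b → a = b) {a : α} :
    (if h : ∃ a, P a then some h.choose else none) = some a ↔ P a := by
  split_ifs with h
  · exact ⟨fun ha => Option.some.inj ha ▸ h.choose_spec,
      fun ha => congrArg some (hP _ _ h.choose_spec ha)⟩
  · simpa using fun ha => h ⟨a, ha⟩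

namespace MttF

namespace RTree

variable {α β : Type}

theorem map_node (f : α → β) (a : α) (ts : List (RTree α)) :
    map f (node a ts) = node (f a) (ts.map (map f)) := by
  rw [map]; simp

@[induction_eliminator]
theorem ind {motive : RTree α → Prop}
    (node : ∀ a ts, (∀ u ∈ ts, motive u) → motive (RTree.node a ts)) : ∀ u, motive u
  | .node a ts => node a ts fun u _ => ind node u
decreasing_by
  have := List.sizeOf_lt_of_mem ‹u ∈ ts›
  simp only [RTree.node.sizeOf_spec]
  omega

theorem map_injective {f : α → β} (hf : Function.Injective f) : Function.Injective (map f) := by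
  intro u
  induction u with
  | node a ts ih =>
    rintro ⟨a', ts'⟩ h
    simp only [map_node, node.injEq, List.map_eq_iff_forall₂, List.forall₂_map_right_iff] at h
    have hts : List.Forall₂ (· = ·) ts ts' :=
      (List.forall₂_congr_of_mem fun u hu u' => ⟨@ih u hu u', congrArg (map f)⟩).mp h.2
    rw [List.forall₂_eq_eq_eq] at hts
    rw [hf h.1, hts]

theorem Subtree.trans {u v w : RTree α} (h₁ : Subtree u v) (h₂ : Subtree v w) : Subtree u w := by
  induction h₂ with
  | refl => exact h₁
  | step hc _ ih => exact .step hc ih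

theorem Subtree.of_mem_children {c w t : RTree α} (hw : Subtree w t) (hc : c ∈ w.children) :
    Subtree c t := by
  cases w
  exact (Subtree.step hc (.refl c)).trans hw

theorem Wf.of_subtree {rk : α → ℕ} {w t : RTree α} (h : Subtree w t) (ht : t.Wf rk) :
    w.Wf rk := by
  induction h with
  | refl => exact ht
  | step hc _ ih => cases ht with | node _ hall => exact ih (hall _ hc)

theorem Wf.length_children {rk : α → ℕ} {t : RTree α} (ht : t.Wf rk) :
    t.children.length = rk t.label := by
  cases ht with | node hlen _ => exact hlen

theorem Wf.children {rk : α → ℕ} {t : RTree α} (ht : t.Wf rk) : ∀ s ∈ t.children, s.Wf rk := by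
  cases ht with | node _ h => exact h

end RTree

variable {Γ Δ Q : Type}

theorem embed_node (d : Δ) (ts : List (RTree Δ)) :
    embed (.node d ts) = .node (OLab.out d) (ts.map embed) :=
  RTree.map_node ..

theorem embed_injective : Function.Injective (embed (Δ := Δ)) :=
  RTree.map_injective fun _ _ => OLab.out.inj

theorem substY_out (ts : List (OT Δ)) (d : Δ) (us : List (OT Δ)) :
    substY ts (.node (.out d) us) = .node (.out d) (us.map (substY ts)) := by
  rw [substY]; simp

theorem substX_node (ss : List (RTree Γ)) (l : RLab Δ Q) (rs : List (Rhs Δ Q)) :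
    substX ss (.node l rs) = .node (l.subst ss) (rs.map (substX ss)) :=
  RTree.map_node ..

inductive ParamsLt (m : ℕ) : OT Δ → Prop
  | out {d : Δ} {ts : List (OT Δ)} (h : ∀ u ∈ ts, ParamsLt m u) : ParamsLt m (.node (.out d) ts)
  | param {i : ℕ} (h : i < m) : ParamsLt m (.node (.param i) [])

inductive STParamsLt (m : ℕ) : ST Γ Δ Q → Prop
  | out {d : Δ} {ts : List (ST Γ Δ Q)} (h : ∀ u ∈ ts, STParamsLt m u) :
      STParamsLt m (.node (.out d) ts)
  | call {q : Q} {s : RTree Γ} {ts : List (ST Γ Δ Q)} (h : ∀ u ∈ ts, STParamsLt m u) :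
      STParamsLt m (.node (.call q s) ts)
  | param {i : ℕ} (h : i < m) : STParamsLt m (.node (.param i) [])

theorem substY_param_of_lt {ts : List (OT Δ)} {i : ℕ} (h : i < ts.length) :
    substY ts (.node (.param i) []) = ts[i] := by
  rw [substY, List.getD_eq_getElem?_getD, List.getElem?_eq_getElem h, Option.getD_some]

theorem ParamsLt.substY {m : ℕ} {ts : List (OT Δ)} {u : OT Δ} (hu : ParamsLt ts.length u)
    (hts : ∀ x ∈ ts, ParamsLt m x) : ParamsLt m (substY ts u) := by
  induction hu with
  | out _ ih =>
    rw [substY_out]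
    exact .out (by simpa using ih)
  | param h =>
    rw [substY_param_of_lt h]
    exact hts _ (List.getElem_mem h)

theorem substY_substY {ts ts₀ : List (OT Δ)} {u : OT Δ} (hu : ParamsLt ts₀.length u) :
    substY ts (substY ts₀ u) = substY (ts₀.map (substY ts)) u := by
  induction hu with
  | out _ ih =>
    simp only [substY_out, List.map_map]
    exact congrArg _ (List.map_congr_left fun u hu => ih u hu)
  | param h =>
    rw [substY_param_of_lt h, substY_param_of_lt (by simpa using h), List.getElem_map]

theorem RhsWf.stWf_paramsLt_substX {M : MTT Γ Δ Q} {r : Rhs Δ Q} {ss : List (RTree Γ)} {m : ℕ}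
    (hr : RhsWf M.rankΔ M.rankQ ss.length m r) (hss : ∀ s ∈ ss, s.Wf M.rankΓ) :
    STWf M.rankΓ M.rankΔ M.rankQ (substX ss r) ∧ STParamsLt m (substX ss r) := by
  induction hr with
  | out hlen _ ih =>
    rw [substX_node]
    exact ⟨.out (by simpa using hlen) (by simpa using fun u hu => (ih u hu).1),
      .out (by simpa using fun u hu => (ih u hu).2)⟩
  | call hx hlen _ ih =>
    rw [substX_node, RLab.subst, List.getElem?_eq_getElem hx]
    exact ⟨.call (hss _ (List.getElem_mem hx)) (by simpa using hlen)
        (by simpa using fun u hu => (ih u hu).1),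
      .call (by simpa using fun u hu => (ih u hu).2)⟩
  | param hi =>
    rw [substX_node]
    exact ⟨.param _, .param hi⟩

theorem MTT.stWf_paramsLt_substX_rule {M : MTT Γ Δ Q} {q : Q} {s : RTree Γ} {r : Rhs Δ Q}
    (hs : s.Wf M.rankΓ) (hr : r ∈ M.rules q s.label) :
    STWf M.rankΓ M.rankΔ M.rankQ (substX s.children r) ∧
      STParamsLt (M.rankQ q) (substX s.children r) :=
  (hs.length_children ▸ M.rules_wf q _ r hr).stWf_paramsLt_substX hs.children

theorem semIO_paramsLt {M : MTT Γ Δ Q} {u : ST Γ Δ Q} {t₀ : OT Δ} {m : ℕ}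
    (h : SemIO M.sel u t₀) (hwf : STWf M.rankΓ M.rankΔ M.rankQ u) (hb : STParamsLt m u) :
    ParamsLt m t₀ := by
  induction h generalizing m with
  | param i => cases hb with | param hi => exact .param hi
  | @out d us ts hlen _ ih =>
    cases hwf with | out _ hwfc =>
    cases hb with | out hbc =>
    refine .out fun x hx => ?_
    obtain ⟨i, hi, rfl⟩ := List.mem_iff_getElem.mp hx
    have hi' : i < us.length := hlen ▸ hi
    simpa using ih ⟨i, hi'⟩ (hwfc _ (List.getElem_mem hi')) (hbc _ (List.getElem_mem hi'))
  | @call q' σ ss us r t₀' ts hr _ hlen _ ih₀ ih =>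
    cases hwf with | call hs hlenus hwfc =>
    cases hb with | call hbc =>
    obtain ⟨hwf₀, hb₀⟩ := MTT.stWf_paramsLt_substX_rule hs hr
    have hb : ParamsLt ts.length t₀' := by
      rw [hlen, hlenus]
      exact ih₀ hwf₀ hb₀
    refine hb.substY fun x hx => ?_
    obtain ⟨i, hi, rfl⟩ := List.mem_iff_getElem.mp hx
    have hi' : i < us.length := hlen ▸ hi
    simpa using ih ⟨i, hi'⟩ (hwfc _ (List.getElem_mem hi')) (hbc _ (List.getElem_mem hi'))

open Classical in
noncomputable def rho (t : RTree Δ) (t' : OT Δ) : V Δ :=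
  if h : ∃ w, RTree.Subtree w t ∧ embed w = t' then some h.choose else none

open Classical in
noncomputable def nodeV (t : RTree Δ) (d : Δ) (us : List (V Δ)) : V Δ :=
  if h : ∃ w, RTree.Subtree w t ∧ w.label = d ∧ w.children.map some = us then some h.choose
  else none

section Rho

variable {t : RTree Δ}

theorem rho_eq_some_iff {t' : OT Δ} {w : RTree Δ} :
    rho t t' = some w ↔ RTree.Subtree w t ∧ embed w = t' :=
  Option.dite_choose_eq_some_iff fun _ _ h₁ h₂ => embed_injective (h₁.2.trans h₂.2.symm)

theorem rhoRel_iff {t' : OT Δ} {v : V Δ} : rhoRel t t' v ↔ rho t t' = v := by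
  cases v with
  | some w => exact rho_eq_some_iff.symm
  | none =>
    simp only [rhoRel, Option.eq_none_iff_forall_ne_some, ne_eq, rho_eq_some_iff]
    exact not_exists

theorem mem_rhoImg {T : Set (OT Δ)} {v : V Δ} : v ∈ rhoImg t T ↔ ∃ t' ∈ T, rho t t' = v :=
  exists_congr fun _ => and_congr_right fun _ => rhoRel_iff

theorem inV_rho (t' : OT Δ) : InV t (rho t t') := by
  cases h : rho t t' with
  | none => trivial
  | some w => exact (rho_eq_some_iff.mp h).1

theorem nodeV_eq_some_iff {d : Δ} {us : List (V Δ)} {w : RTree Δ} :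
    nodeV t d us = some w ↔ RTree.Subtree w t ∧ w.label = d ∧ w.children.map some = us := by
  refine Option.dite_choose_eq_some_iff fun ⟨a, cs⟩ ⟨b, ds⟩ h₁ h₂ => ?_
  simp only [RTree.label, RTree.children] at h₁ h₂
  rw [h₁.2.1, h₂.2.1, List.map_injective_iff.mpr (Option.some_injective _)
    (h₁.2.2.trans h₂.2.2.symm)]

theorem rho_out_node (d : Δ) (cs : List (OT Δ)) :
    rho t (.node (.out d) cs) = nodeV t d (cs.map (rho t)) := by
  refine Option.ext fun ⟨a, ws⟩ => ?_
  simp only [rho_eq_some_iff, nodeV_eq_some_iff, embed_node, RTree.label,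
    RTree.children, RTree.node.injEq, OLab.out.injEq, List.map_eq_iff_forall₂,
    List.forall₂_map_right_iff]
  refine and_congr_right fun hw => and_congr_right fun _ =>
    List.forall₂_congr_of_mem fun w hw' c => ?_
  exact ⟨fun h => (rho_eq_some_iff.mpr ⟨hw.of_mem_children hw', h⟩).symm,
    fun h => (rho_eq_some_iff.mp h.symm).2⟩

end Rho

section SemIO

variable {rsel : Q → Γ → List (RTree Γ) → Set (Rhs Δ Q)} {t' : OT Δ}

theorem semIO_param_iff {i : ℕ} :
    SemIO rsel (.node (.param i) []) t' ↔ t' = .node (.param i) [] := by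
  refine ⟨fun h => ?_, fun h => h ▸ .param i⟩
  cases h
  rfl

theorem semIO_out_iff {d : Δ} {us : List (ST Γ Δ Q)} :
    SemIO rsel (.node (.out d) us) t' ↔
      ∃ ts, List.Forall₂ (SemIO rsel) us ts ∧ .node (.out d) ts = t' := by
  constructor
  · intro h
    cases h with
    | out hlen h => exact ⟨_, (List.forall₂_iff_fin hlen).mpr h, rfl⟩
  · rintro ⟨ts, h, rfl⟩
    have hlen := h.length_eq.symm
    exact .out hlen ((List.forall₂_iff_fin hlen).mp h)

theorem semIO_call_iff {q : Q} {σ : Γ} {ss : List (RTree Γ)} {us : List (ST Γ Δ Q)} :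
    SemIO rsel (.node (.call q (.node σ ss)) us) t' ↔
      ∃ r ∈ rsel q σ ss, ∃ t₀, SemIO rsel (substX ss r) t₀ ∧
        ∃ ts, List.Forall₂ (SemIO rsel) us ts ∧ substY ts t₀ = t' := by
  constructor
  · intro h
    cases h with
    | call hr h₀ hlen h => exact ⟨_, hr, _, h₀, _, (List.forall₂_iff_fin hlen).mpr h, rfl⟩
  · rintro ⟨r, hr, t₀, h₀, ts, h, rfl⟩
    have hlen := h.length_eq.symm
    exact .call hr h₀ hlen ((List.forall₂_iff_fin hlen).mp h)

end SemIO

section FPred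

variable {t : RTree Δ} {vs : List (V Δ)} {aenv : List (Set (Trip Δ Q))} {v : V Δ}

theorem fPred_param_iff {i : ℕ} :
    FPred t vs aenv (.node (.param i) []) v ↔ vs[i]? = some v := by
  refine ⟨fun h => ?_, .param⟩
  cases h with
  | param h => exact h

theorem fPred_call_iff {q : Q} {x : ℕ} {rs : List (Rhs Δ Q)} :
    FPred t vs aenv (.node (.call q x) rs) v ↔
      ∃ us, (q, us, v) ∈ aenv.getD x ∅ ∧ List.Forall₂ (FPred t vs aenv) rs us := by
  constructor
  · intro h
    cases h with
    | call us hlen ha h => exact ⟨us, ha, (List.forall₂_iff_fin hlen).mpr h⟩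
  · rintro ⟨us, ha, h⟩
    have hlen := h.length_eq.symm
    exact .call us hlen ha ((List.forall₂_iff_fin hlen).mp h)

theorem fPred_out_iff {rankΔ : Δ → ℕ} (ht : t.Wf rankΔ) {d : Δ} {rs : List (Rhs Δ Q)}
    (hlen : rs.length = rankΔ d) :
    FPred t vs aenv (.node (.out d) rs) v ↔
      ∃ us, List.Forall₂ (FPred t vs aenv) rs us ∧ (∀ u ∈ us, InV t u) ∧ nodeV t d us = v := by
  have hchildren {w : RTree Δ} (hw : RTree.Subtree w t) (hl : w.label = d) :
      w.children.length = rs.length := by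
    rw [(ht.of_subtree hw).length_children, hl, hlen]
  constructor
  · intro h
    cases h with
    | @outSome _ _ w hw hl h =>
      have hlen' : (w.children.map some).length = rs.length := by simp [hchildren hw hl]
      refine ⟨_, (List.forall₂_iff_fin hlen').mpr fun i => ?_,
        ?_, nodeV_eq_some_iff.mpr ⟨hw, hl, rfl⟩⟩
      · simpa [List.getElem?_eq_getElem (by rw [hchildren hw hl]; exact i.2)] using h i
      · simp only [List.mem_map, forall_exists_index, and_imp]
        rintro _ c hc rfl
        exact hw.of_mem_children hc
    | outNone us hlen' hus h hno =>
      refine ⟨us, (List.forall₂_iff_fin hlen').mpr h, hus, ?_⟩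
      refine Option.eq_none_iff_forall_ne_some.mpr fun w hv => hno ?_
      obtain ⟨hw, hl, rfl⟩ := nodeV_eq_some_iff.mp hv
      exact ⟨w, hw, hl, fun i => by simp⟩
  · rintro ⟨us, h, hus, rfl⟩
    have hlen' := h.length_eq.symm
    cases hv : nodeV t d us with
    | some w =>
      obtain ⟨hw, hl, rfl⟩ := nodeV_eq_some_iff.mp hv
      refine .outSome hw hl fun i => ?_
      simpa [List.getElem?_eq_getElem (by rw [hchildren hw hl]; exact i.2)] using
        (List.forall₂_iff_fin hlen').mp h i
    | none =>
      refine .outNone us hlen' hus ((List.forall₂_iff_fin hlen').mp h) ?_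
      rintro ⟨w, hw, hl, hch⟩
      suffices w.children.map some = us by simp [nodeV_eq_some_iff.mpr ⟨hw, hl, this⟩] at hv
      refine List.ext_getElem (by simp [hchildren hw hl, hlen']) fun i h₁ _ => ?_
      have hi : i < w.children.length := by simpa using h₁
      simpa [List.getElem?_eq_getElem hi] using hch ⟨i, hchildren hw hl ▸ hi⟩

end FPred

theorem mem_runIO {rankQ : Q → ℕ} {rsel : Q → Γ → List (RTree Γ) → Set (Rhs Δ Q)}
    {t : RTree Δ} {q : Q} {vs : List (V Δ)} {v : V Δ} {σ : Γ} {ss : List (RTree Γ)} :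
    (q, vs, v) ∈ runIO rankQ rsel t (.node σ ss) ↔
      vs.length = rankQ q ∧ (∀ u ∈ vs, InV t u) ∧ InV t v ∧
        ∃ r ∈ rsel q σ ss, FPred t vs (ss.map (runIO rankQ rsel t)) r v := by
  rw [runIO]
  simp

section Correctness

variable {M : MTT Γ Δ Q} {t : RTree Δ}

theorem fPred_iff_semIO (ht : t.Wf M.rankΔ) {ss : List (RTree Γ)}
    (hss : ∀ s ∈ ss, s.Wf M.rankΓ)
    (ih : ∀ s ∈ ss, ∀ {q : Q} {ts : List (OT Δ)}, ts.length = M.rankQ q → ∀ {v : V Δ},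
      ((q, ts.map (rho t), v) ∈ runIO M.rankQ M.sel t s ↔
        ∃ r ∈ M.rules q s.label, ∃ t₀, SemIO M.sel (substX s.children r) t₀ ∧
          rho t (substY ts t₀) = v))
    {ts : List (OT Δ)} {r : Rhs Δ Q} (hr : RhsWf M.rankΔ M.rankQ ss.length ts.length r)
    (v : V Δ) :
    FPred t (ts.map (rho t)) (ss.map (runIO M.rankQ M.sel t)) r v ↔
      ∃ t₀, SemIO M.sel (substX ss r) t₀ ∧ rho t (substY ts t₀) = v := by
  induction hr generalizing v with
  | @param i hi =>
    rw [fPred_param_iff, substX_node]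
    simp [RLab.subst, semIO_param_iff, substY_param_of_lt hi, List.getElem?_eq_getElem hi]
  | @out d rs hlen _ ihr =>
    rw [fPred_out_iff ht hlen, substX_node]
    simp only [RLab.subst, semIO_out_iff, List.forall₂_congr_of_mem ihr,
      List.forall₂_exists_map_iff, List.forall₂_map_left_iff]
    constructor
    · rintro ⟨_, ⟨l, hl, rfl⟩, -, rfl⟩
      refine ⟨_, ⟨l, hl, rfl⟩, ?_⟩
      rw [substY_out, rho_out_node, List.map_map]
      rfl
    · rintro ⟨_, ⟨l, hl, rfl⟩, rfl⟩
      refine ⟨_, ⟨l, hl, rfl⟩, by simp [inV_rho], ?_⟩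
      rw [substY_out, rho_out_node, List.map_map]
      rfl
  | @call q' x rs hx hlen _ ihr =>
    rw [fPred_call_iff, substX_node]
    simp only [RLab.subst, List.getElem?_eq_getElem hx]
    rcases hsx : ss[x] with ⟨σ', ss'⟩
    have hwf : (RTree.node σ' ss').Wf M.rankΓ := hsx ▸ hss _ (List.getElem_mem hx)
    have key (l : List (OT Δ)) (hl : l.length = M.rankQ q') :
        (q', l.map (fun c => rho t (substY ts c)), v) ∈ runIO M.rankQ M.sel t (.node σ' ss') ↔
          ∃ r' ∈ M.rules q' σ', ∃ t₀, SemIO M.sel (substX ss' r') t₀ ∧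
            rho t (substY ts (substY l t₀)) = v := by
      rw [show l.map (fun c => rho t (substY ts c)) = (l.map (substY ts)).map (rho t) by simp,
        ih _ (hsx ▸ List.getElem_mem hx) (by simpa)]
      refine exists_congr fun r' => and_congr_right fun hr' =>
        exists_congr fun t₀ => and_congr_right fun h₀ => ?_
      obtain ⟨hwf₀, hb₀⟩ := MTT.stWf_paramsLt_substX_rule hwf hr'
      rw [substY_substY (hl ▸ semIO_paramsLt h₀ hwf₀ hb₀)]
    rw [List.getD_eq_getElem?_getD, List.getElem?_map, List.getElem?_eq_getElem hx, hsx,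
      Option.map_some, Option.getD_some]
    simp only [semIO_call_iff, List.forall₂_congr_of_mem ihr, List.forall₂_exists_map_iff,
      List.forall₂_map_left_iff]
    constructor
    · rintro ⟨_, hrun, l, hl, rfl⟩
      obtain ⟨r', hr', t₀, h₀, hv⟩ := (key l (hl.length_eq ▸ hlen)).mp hrun
      exact ⟨_, ⟨r', hr', t₀, h₀, l, hl, rfl⟩, hv⟩
    · rintro ⟨_, ⟨r', hr', t₀, h₀, l, hl, rfl⟩, hv⟩
      exact ⟨_, (key l (hl.length_eq ▸ hlen)).mpr ⟨r', hr', t₀, h₀, hv⟩, l, hl, rfl⟩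

theorem map_rho_mem_runIO_iff (ht : t.Wf M.rankΔ) {s : RTree Γ} (hs : s.Wf M.rankΓ) {q : Q}
    {ts : List (OT Δ)} (hts : ts.length = M.rankQ q) {v : V Δ} :
    (q, ts.map (rho t), v) ∈ runIO M.rankQ M.sel t s ↔
      ∃ r ∈ M.rules q s.label, ∃ t₀, SemIO M.sel (substX s.children r) t₀ ∧
        rho t (substY ts t₀) = v := by
  induction s generalizing q ts v with
  | node σ ss ih =>
    have hss := hs.children
    have hfpred {r} (hr : r ∈ M.rules q σ) :=
      fPred_iff_semIO ht hss (fun s hs' => ih s hs' (hss s hs'))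
        (hs.length_children ▸ hts ▸ M.rules_wf q σ r hr) v
    rw [mem_runIO]
    simp only [List.length_map, hts, List.mem_map, forall_exists_index, and_imp,
      forall_apply_eq_imp_iff₂, inV_rho, implies_true, true_and]
    constructor
    · rintro ⟨-, r, hr, hf⟩
      exact ⟨r, hr, (hfpred hr).mp hf⟩
    · rintro ⟨r, hr, hv⟩
      obtain ⟨t₀, h₀, rfl⟩ := hv
      exact ⟨inV_rho _, r, hr, (hfpred hr).mpr ⟨t₀, h₀, rfl⟩⟩

end Correctness

/-- the correctness claim for the inverse-type construction for
IO-mtts.  For every input tree `s'`, state `q` of rank `n`, and parameter-free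
trees `r_1,…,r_n` over `Δ ∪ (Q × T_Σ)`:
`ρ(⟦⟨q,s'⟩(r_1,…,r_n)⟧_IO) = { v' | ∃ v⃗, (q,v⃗,v') ∈ run(s') ∧ v_i ∈ ρ(⟦r_i⟧_IO) }`. -/
theorem runIO_claim {Γ Δ Q : Type} [Fintype Γ] [Fintype Δ] [Fintype Q]
    (M : MTT Γ Δ Q) (t : RTree Δ) (ht : t.Wf M.rankΔ)
    (s' : RTree Γ) (hs : s'.Wf M.rankΓ)
    (q : Q) (rs : List (ST Γ Δ Q)) (hlen : rs.length = M.rankQ q)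
    (hrs : ∀ r ∈ rs, STWf M.rankΓ M.rankΔ M.rankQ r ∧ NoParam r) :
    rhoImg t {t' | SemIO M.sel (.node (.call q s') rs) t'} =
      {v' | ∃ vs : List (V Δ),
        (q, vs, v') ∈ runIO M.rankQ M.sel t s' ∧
        List.Forall₂ (fun r v => v ∈ rhoImg t {w | SemIO M.sel r w}) rs vs} := by
  obtain ⟨σ, ss⟩ := s'
  ext v'
  simp only [Set.mem_ofPred_eq, mem_rhoImg, semIO_call_iff, List.forall₂_exists_map_iff]
  constructor
  · rintro ⟨_, ⟨r, hr, t₀, h₀, ts, hts, rfl⟩, rfl⟩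
    refine ⟨_, ?_, ts, hts, rfl⟩
    exact (map_rho_mem_runIO_iff ht hs (hts.length_eq ▸ hlen)).mpr ⟨r, hr, t₀, h₀, rfl⟩
  · rintro ⟨_, hrun, ts, hts, rfl⟩
    obtain ⟨r, hr, t₀, h₀, rfl⟩ :=
      (map_rho_mem_runIO_iff ht hs (hts.length_eq ▸ hlen)).mp hrun
    exact ⟨_, ⟨r, hr, t₀, h₀, ts, hts, rfl⟩, rfl⟩

end MttF
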